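/- Wiener's lemma on the circle: for any probability measure μ on the unit circle 𝕋 = ℝ/ℤ, lim_{N→∞} (1/(2N+1)) Σ_{|k|≤N} |μ̂(k)|² = Σ_{x∈𝕋} μ({x})². -/

import Mathlib

/-!
Since `|μ̂(k)|² = ∬ e_{-k}(x - y) dμ(x) dμ(y)`, the Cesàro mean on the left is the integral of the
normalized Dirichlet kernel `(2N + 1)⁻¹ ∑_{|k| ≤ N} e_{-k}` evaluated at `x - y` against `μ × μ`.
This kernel has modulus at most `1`, equals `1` at `0`, and tends to `0` at every `t ≠ 0`, because
there the geometric sum `∑_{|k| ≤ N} e^{-2πikt}` stays bounded by `2 / |e^{-2πit} - 1|`. Dominated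
convergence therefore gives the limit `(μ × μ)(diagonal) = ∑ₓ μ{x}²`.
-/

open MeasureTheory Filter Topology
open scoped ComplexConjugate

namespace MeasureTheory.Measure

theorem prod_apply_diagonal {α : Type*} [MeasurableSpace α] [MeasurableEq α] (μ ν : Measure α)
    [SFinite ν] : μ.prod ν (Set.diagonal α) = ∑' x, μ {x} * ν {x} := by
  set S : Set α := {x | 0 < ν {x}}
  have hS : S.Countable := countable_meas_pos_of_disjoint_iUnion
    (fun x => measurableSet_singleton x) (fun _ _ hxy => Set.disjoint_singleton.2 hxy)
  have hsupp : Function.support (fun x => ν {x}) ⊆ S := fun x hx => pos_iff_ne_zero.2 hx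
  calc μ.prod ν (Set.diagonal α) = ∫⁻ x, ν {x} ∂μ := by
        have hfiber (x : α) : Prod.mk x ⁻¹' Set.diagonal α = {x} := by ext; simp [eq_comm]
        simp_rw [prod_apply measurableSet_diagonal, hfiber]
    _ = ∫⁻ x in S, ν {x} ∂μ := (setLIntegral_eq_of_support_subset hsupp).symm
    _ = ∑' x : S, ν {(x : α)} * μ {(x : α)} := lintegral_countable _ hS
    _ = ∑' x, μ {x} * ν {x} := by
        simp_rw [mul_comm (ν _)]
        exact tsum_subtype_eq_of_support_subset (f := fun x => μ {x} * ν {x})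
          fun x hx => hsupp (right_ne_zero_of_mul hx)

end MeasureTheory.Measure

theorem sub_one_mul_sum_Ico_zpow {K : Type*} [DivisionRing K] {z : K} (hz : z ≠ 0) {a b : ℤ}
    (hab : a ≤ b) : (z - 1) * ∑ k ∈ Finset.Ico a b, z ^ k = z ^ b - z ^ a := by
  induction b, hab using Int.leInduction with
  | base => simp
  | succ b hab ih =>
    rw [Finset.Ico_add_one_right_eq_Icc, ← Finset.Ico_insert_right hab,
      Finset.sum_insert Finset.right_notMem_Ico, mul_add, ih, zpow_add_one₀ hz, sub_one_mul,
      (Commute.self_zpow₀ z b).eq]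
    abel

theorem norm_sum_Ico_zpow_mul_norm_sub_one_le {K : Type*} [NormedDivisionRing K] {z : K}
    (hz : ‖z‖ = 1) {a b : ℤ} (hab : a ≤ b) : ‖∑ k ∈ Finset.Ico a b, z ^ k‖ * ‖z - 1‖ ≤ 2 := by
  have hz0 : z ≠ 0 := norm_ne_zero_iff.1 (by simp [hz])
  calc ‖∑ k ∈ Finset.Ico a b, z ^ k‖ * ‖z - 1‖ = ‖z ^ b - z ^ a‖ := by
        rw [mul_comm, ← norm_mul, sub_one_mul_sum_Ico_zpow hz0 hab]
    _ ≤ ‖z ^ b‖ + ‖z ^ a‖ := norm_sub_le _ _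
    _ = 2 := by simp [norm_zpow, hz]; norm_num

theorem Int.card_Icc_neg_self (N : ℕ) : (Finset.Icc (-(N : ℤ)) N).card = 2 * N + 1 := by
  rw [Int.card_Icc]; omega

namespace AddCircle

variable {T : ℝ}

theorem fourier_neg_apply_eq_zpow (k : ℤ) (t : AddCircle T) :
    fourier (-k) t = (toCircle (-t) : ℂ) ^ k := by
  rw [fourier_apply, neg_smul, ← smul_neg, toCircle_zsmul, Circle.coe_zpow]

theorem norm_fourier_apply (k : ℤ) (t : AddCircle T) : ‖fourier k t‖ = 1 := by
  rw [fourier_apply, Circle.norm_coe]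

variable (T) in
noncomputable def normalizedDirichletKernel (N : ℕ) (t : AddCircle T) : ℂ :=
  ((2 * N + 1 : ℕ) : ℂ)⁻¹ * ∑ k ∈ Finset.Icc (-(N : ℤ)) N, fourier (-k) t

theorem continuous_normalizedDirichletKernel (N : ℕ) :
    Continuous (normalizedDirichletKernel T N) := by
  unfold normalizedDirichletKernel
  fun_prop

theorem normalizedDirichletKernel_zero (N : ℕ) : normalizedDirichletKernel T N 0 = 1 := by
  simp only [normalizedDirichletKernel, fourier_eval_zero, Finset.sum_const, Int.card_Icc_neg_self,
    nsmul_one]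
  exact inv_mul_cancel₀ (Nat.cast_ne_zero.2 (Nat.succ_ne_zero _))

theorem norm_normalizedDirichletKernel_le (N : ℕ) (t : AddCircle T) :
    ‖normalizedDirichletKernel T N t‖ ≤ 1 := by
  have hsum : ‖∑ k ∈ Finset.Icc (-(N : ℤ)) N, fourier (-k) t‖ ≤ (2 * N + 1 : ℕ) := by
    refine (norm_sum_le _ _).trans ?_
    simp only [norm_fourier_apply, Finset.sum_const, Int.card_Icc_neg_self, nsmul_one, le_refl]
  rw [normalizedDirichletKernel, norm_mul, norm_inv, Complex.norm_natCast]
  exact inv_mul_le_one_of_le₀ hsum (Nat.cast_nonneg _)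

theorem tendsto_normalizedDirichletKernel_of_ne_zero (hT : T ≠ 0) {t : AddCircle T} (ht : t ≠ 0) :
    Tendsto (normalizedDirichletKernel T · t) atTop (𝓝 0) := by
  set z : ℂ := ↑(toCircle (-t))
  have hz : ‖z‖ = 1 := Circle.norm_coe _
  have hz1 : ‖z - 1‖ ≠ 0 := by
    rw [norm_ne_zero_iff, sub_ne_zero, ← Circle.coe_one, ← toCircle_zero (T := T), ne_eq,
      Circle.coe_inj, (injective_toCircle hT).eq_iff, neg_eq_zero]
    exact ht
  have hbound (N : ℕ) : ‖normalizedDirichletKernel T N t‖ ≤ (2 * N + 1 : ℝ)⁻¹ * (2 / ‖z - 1‖) := by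
    rw [normalizedDirichletKernel, norm_mul, norm_inv, Complex.norm_natCast]
    simp_rw [fourier_neg_apply_eq_zpow, ← Finset.Ico_add_one_right_eq_Icc]
    push_cast
    gcongr
    rw [le_div_iff₀ (by positivity)]
    exact norm_sum_Ico_zpow_mul_norm_sub_one_le hz (by omega)
  refine squeeze_zero_norm hbound ?_
  simpa using (tendsto_inv_atTop_zero.comp (tendsto_atTop_add_const_right _ 1
    (tendsto_natCast_atTop_atTop.const_mul_atTop two_pos))).mul_const (2 / ‖z - 1‖)

theorem tendsto_normalizedDirichletKernel (hT : T ≠ 0) (t : AddCircle T) :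
    Tendsto (normalizedDirichletKernel T · t) atTop
      (𝓝 (({0} : Set (AddCircle T)).indicator 1 t)) := by
  by_cases ht : t = 0
  · simp [ht, normalizedDirichletKernel_zero]
  · simpa [ht] using tendsto_normalizedDirichletKernel_of_ne_zero hT ht

theorem fourier_sub_apply (k : ℤ) (x y : AddCircle T) :
    fourier k (x - y) = fourier k x * conj (fourier k y) := by
  rw [← fourier_neg, fourier_apply, fourier_apply, fourier_apply, smul_sub, sub_eq_add_neg,
    ← neg_smul, toCircle_add, Circle.coe_mul]

theorem ofReal_norm_integral_fourier_sq (μ : Measure (AddCircle T)) [IsFiniteMeasure μ] (k : ℤ) :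
    ((‖∫ x, fourier k x ∂μ‖ ^ 2 : ℝ) : ℂ) = ∫ p, fourier k (p.1 - p.2) ∂(μ.prod μ) := by
  simp_rw [fourier_sub_apply]
  rw [integral_prod_mul (fun x => fourier k x) (fun y => conj (fourier k y)), integral_conj,
    Complex.mul_conj, Complex.normSq_eq_norm_sq]

theorem integral_normalizedDirichletKernel_sub (μ : Measure (AddCircle T)) [IsFiniteMeasure μ]
    (N : ℕ) :
    ∫ p, normalizedDirichletKernel T N (p.1 - p.2) ∂(μ.prod μ) =
      (((1 / (2 * (N : ℝ) + 1)) * ∑ k ∈ Finset.Icc (-(N : ℤ)) N, ‖∫ x, fourier (-k) x ∂μ‖ ^ 2 :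
        ℝ) : ℂ) := by
  have hint (k : ℤ) : Integrable (fun p : AddCircle T × AddCircle T => fourier k (p.1 - p.2))
      (μ.prod μ) := by
    refine (integrable_const (1 : ℝ)).mono' (by fun_prop) (.of_forall fun p => ?_)
    rw [norm_fourier_apply]
  simp only [normalizedDirichletKernel]
  rw [integral_const_mul, integral_finsetSum _ fun k _ => hint (-k)]
  simp_rw [← ofReal_norm_integral_fourier_sq]
  push_cast
  ring

theorem tendsto_integral_normalizedDirichletKernel_sub (hT : T ≠ 0) (μ ν : Measure (AddCircle T))
    [IsFiniteMeasure μ] [IsFiniteMeasure ν] :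
    Tendsto (fun N => ∫ p, normalizedDirichletKernel T N (p.1 - p.2) ∂(μ.prod ν)) atTop
      (𝓝 ((μ.prod ν).real (Set.diagonal (AddCircle T)))) := by
  have hlim : ∫ p, ({0} : Set (AddCircle T)).indicator (1 : AddCircle T → ℂ) (p.1 - p.2) ∂(μ.prod ν)
      = (μ.prod ν).real (Set.diagonal (AddCircle T)) := by
    have hdiag (p : AddCircle T × AddCircle T) :
        ({0} : Set (AddCircle T)).indicator (1 : AddCircle T → ℂ) (p.1 - p.2)
          = (Set.diagonal (AddCircle T)).indicator (fun _ => 1) p := by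
      simp [Set.indicator_apply, sub_eq_zero]
    simp_rw [hdiag]
    rw [integral_indicator_const _ measurableSet_diagonal, Complex.real_smul, mul_one]
  rw [← hlim]
  refine tendsto_integral_of_dominated_convergence (fun _ => 1) (fun N => ?_) (integrable_const 1)
    (fun N => .of_forall fun _ => norm_normalizedDirichletKernel_le N _)
    (.of_forall fun _ => tendsto_normalizedDirichletKernel hT _)
  exact ((continuous_normalizedDirichletKernel N).comp (by fun_prop)).aestronglyMeasurable

end AddCircle

/-- Wiener's lemma on the circle:
`(1/(2N+1)) Σ_{|k|≤N} |μ̂(k)|² → Σ_x μ({x})²`. -/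
theorem wiener_lemma_circle (μ : Measure UnitAddCircle) [IsProbabilityMeasure μ] :
    Tendsto (fun N : ℕ => (1 / (2 * (N : ℝ) + 1)) *
        ∑ k ∈ Finset.Icc (-(N : ℤ)) (N : ℤ), ‖∫ x, fourier (-k) x ∂μ‖ ^ 2)
      atTop (𝓝 (∑' x : UnitAddCircle, (μ {x}).toReal ^ 2)) := by
  have h := AddCircle.tendsto_integral_normalizedDirichletKernel_sub one_ne_zero μ μ
  simp_rw [AddCircle.integral_normalizedDirichletKernel_sub] at h
  rw [measureReal_def, Measure.prod_apply_diagonal, ENNReal.tsum_toReal_eq fun x =>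
    ENNReal.mul_ne_top (measure_ne_top μ _) (measure_ne_top μ _)] at h
  simpa only [← sq, ENNReal.toReal_pow, tendsto_ofReal_iff] using h
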